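/- For any density operator ρ on ℂᵈ and any complete projective (von Neumann) measurement Π in an orthonormal basis of ℂᵈ, ½‖ρ − Π[ρ]‖₁ ≤ 1 − 1/d. -/

import Mathlib

open Matrix Kronecker BigOperators
open scoped ComplexOrder

/-- Trace norm (Schatten 1-norm): `Tr √(XᴴX)`. -/
noncomputable def traceNorm {m n : Type*} [Fintype m] [Fintype n] [DecidableEq n]
    (X : Matrix m n ℂ) : ℝ :=
  (((Matrix.posSemidef_conjTranspose_mul_self X).1.eigenvectorUnitary : Matrix n n ℂ) *
    Matrix.diagonal (((↑) : ℝ → ℂ) ∘ (√·) ∘ (Matrix.posSemidef_conjTranspose_mul_self X).1.eigenvalues) *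
    (star (Matrix.posSemidef_conjTranspose_mul_self X).1.eigenvectorUnitary : Matrix n n ℂ)).trace.re


/-- Complete projective measurement in the orthonormal basis `e`. -/
noncomputable def projMeas {d : ℕ} (e : Fin d → Fin d → ℂ)
    (τ : Matrix (Fin d) (Fin d) ℂ) : Matrix (Fin d) (Fin d) ℂ :=
  ∑ i, Matrix.vecMulVec (e i) (star (e i)) * τ * Matrix.vecMulVec (e i) (star (e i))

/-!
For a traceless Hermitian `M`, `½‖M‖₁ = Tr(P M)` where `P` is the spectral projection onto the
positive part of `M`, so `0 ≤ P ≤ 1`. With `M = ρ - Π[ρ]` this is `t - s`, where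
`t = Tr(P ρ) ≤ Tr ρ = 1` and `s = Tr(P Π[ρ])`. The pinching inequality `ρ ≤ d • Π[ρ]` gives
`t ≤ d s`, hence `t - s ≤ (1 - 1/d) t ≤ 1 - 1/d`. In the measurement basis, `d • Π[ρ] - ρ` is the
Schur product of `ρ` with the positive semidefinite matrix `d • 1 - J` (`J` the all-ones matrix).
-/

open scoped MatrixOrder

namespace Matrix

variable {n 𝕜 : Type*} [Fintype n] [DecidableEq n] [RCLike 𝕜]

lemma PosSemidef.trace_mul_nonneg {A B : Matrix n n 𝕜} (hA : A.PosSemidef) (hB : B.PosSemidef) :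
    0 ≤ (A * B).trace := by
  obtain ⟨C, rfl⟩ := CStarAlgebra.nonneg_iff_eq_star_mul_self.mp hA.nonneg
  rw [star_eq_conjTranspose, Matrix.mul_assoc, trace_mul_comm]
  exact (hB.mul_mul_conjTranspose_same C).trace_nonneg

lemma posSemidef_natCast_card_sub_of_const_one :
    ((Fintype.card n : Matrix n n 𝕜) - of fun _ _ => 1).PosSemidef := by
  refine .of_dotProduct_mulVec_nonneg ?_ fun x => ?_
  · exact (isHermitian_natCast _).sub (by ext; simp)
  · have hsum : ‖∑ i, x i‖ ^ 2 ≤ Fintype.card n * ∑ i, ‖x i‖ ^ 2 :=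
      (pow_le_pow_left₀ (norm_nonneg _) (norm_sum_le _ _) 2).trans (sq_sum_le_card_mul_sum_sq ..)
    have hquad : star x ⬝ᵥ (((Fintype.card n : Matrix n n 𝕜) - of fun _ _ => 1) *ᵥ x) =
        ((Fintype.card n * ∑ i, ‖x i‖ ^ 2 - ‖∑ i, x i‖ ^ 2 : ℝ) : 𝕜) := by
      have hdiag : star x ⬝ᵥ x = ((∑ i, ‖x i‖ ^ 2 : ℝ) : 𝕜) := by
        simp [dotProduct, RCLike.conj_mul]
      have hconst : star x ⬝ᵥ ((of fun _ _ => 1 : Matrix n n 𝕜) *ᵥ x) =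
          ((‖∑ i, x i‖ ^ 2 : ℝ) : 𝕜) := by
        simp [dotProduct, mulVec, ← Finset.sum_mul, ← map_sum, RCLike.conj_mul]
      rw [sub_mulVec, dotProduct_sub, ← nsmul_one, smul_mulVec, one_mulVec, dotProduct_smul,
        hdiag, hconst, nsmul_eq_mul]
      push_cast
      ring
    rw [hquad]
    exact_mod_cast sub_nonneg.mpr hsum

lemma PosSemidef.le_card_smul_diagonal_diag {σ : Matrix n n 𝕜} (hσ : σ.PosSemidef) :
    σ ≤ (Fintype.card n : 𝕜) • diagonal σ.diag := by
  rw [le_iff]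
  convert posSemidef_natCast_card_sub_of_const_one.hadamard hσ using 2
  ext i j
  by_cases h : i = j
  · subst h; simp [natCast_apply]; ring
  · simp [h, natCast_apply]

lemma traceNorm_eq_re_trace_cfcAbs (X : Matrix n n ℂ) : traceNorm X = (CFC.abs X).trace.re := by
  have hX := posSemidef_conjTranspose_mul_self X
  rw [CFC.abs, star_eq_conjTranspose, CFC.sqrt_eq_real_sqrt _ hX.nonneg, cfcₙ_eq_cfc, hX.1.cfc_eq]
  rfl

lemma IsHermitian.exists_cfcAbs_eq {M : Matrix n n ℂ} (hM : M.IsHermitian) :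
    ∃ P : Matrix n n ℂ, 0 ≤ P ∧ P ≤ 1 ∧ CFC.abs M = (2 : ℝ) • (P * M) - M := by
  have hcont (f : ℝ → ℝ) : ContinuousOn f (spectrum ℝ M) := M.finite_real_spectrum.continuousOn f
  set s : ℝ → ℝ := fun x => if 0 < x then 1 else 0
  have habs : (‖·‖) = fun x => 2 * (s x * x) - x := by
    ext x; simp only [s, Real.norm_eq_abs]; split_ifs with h
    · rw [abs_of_pos h]; ring
    · rw [abs_of_nonpos (not_lt.mp h)]; ring
  refine ⟨cfc s M, cfc_nonneg fun x _ => ?_, cfc_le_one _ _ fun x _ => ?_, ?_⟩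
  · simp only [s]; split_ifs <;> norm_num
  · simp only [s]; split_ifs <;> norm_num
  rw [CFC.abs_eq_cfc_norm M hM, habs, cfc_sub _ _ M (hcont _) (hcont _),
    cfc_const_mul _ _ M (hcont _), cfc_mul _ _ M (hcont _) (hcont _),
    show cfc (fun x : ℝ => x) M = M from cfc_id' ℝ M hM]

lemma IsHermitian.exists_traceNorm_eq {M : Matrix n n ℂ} (hM : M.IsHermitian) :
    ∃ P : Matrix n n ℂ, P.PosSemidef ∧ (1 - P).PosSemidef ∧
      traceNorm M = 2 * (P * M).trace.re - M.trace.re := by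
  obtain ⟨P, hP0, hP1, hP⟩ := hM.exists_cfcAbs_eq
  refine ⟨P, hP0.posSemidef, sub_nonneg.mpr hP1 |>.posSemidef, ?_⟩
  rw [traceNorm_eq_re_trace_cfcAbs, hP, trace_sub, trace_smul]
  simp

lemma PosSemidef.half_traceNorm_sub_le {ρ Q : Matrix n n ℂ} (hρ : ρ.PosSemidef)
    (hQ : Q.IsHermitian) (htr : Q.trace = ρ.trace) {c : ℝ} (hc : 1 ≤ c) (hρQ : ρ ≤ (c : ℂ) • Q) :
    1 / 2 * traceNorm (ρ - Q) ≤ (1 - 1 / c) * ρ.trace.re := by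
  obtain ⟨P, hP, hP1, hnorm⟩ := (hρ.isHermitian.sub hQ).exists_traceNorm_eq
  have hdom := (Complex.nonneg_iff.mp (hP.trace_mul_nonneg hρQ)).1
  have hle := (Complex.nonneg_iff.mp (hP1.trace_mul_nonneg hρ)).1
  rw [trace_sub, htr, sub_self, Matrix.mul_sub, trace_sub] at hnorm
  rw [Matrix.mul_sub, Matrix.mul_smul, trace_sub, trace_smul] at hdom
  rw [Matrix.sub_mul, Matrix.one_mul, trace_sub] at hle
  simp only [Complex.sub_re, Complex.zero_re, sub_zero, smul_eq_mul, Complex.mul_re,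
    Complex.ofReal_re, Complex.ofReal_im, zero_mul, sub_nonneg] at hnorm hdom hle
  set t := (P * ρ).trace.re
  set s := (P * Q).trace.re
  have hs : t / c ≤ s := (div_le_iff₀' (by positivity)).mpr hdom
  calc 1 / 2 * traceNorm (ρ - Q) = t - s := by rw [hnorm]; ring
    _ ≤ (1 - 1 / c) * t := by linarith [mul_one_div t c]
    _ ≤ (1 - 1 / c) * ρ.trace.re :=
      mul_le_mul_of_nonneg_left hle (sub_nonneg.mpr (div_le_one_of_le₀ hc (by positivity)))

end Matrix

section ProjMeas

variable {d : ℕ} (e : Fin d → Fin d → ℂ)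

lemma projMeas_eq_conj_diagonal (ρ : Matrix (Fin d) (Fin d) ℂ) :
    projMeas e ρ = (of e)ᵀ * diagonal ((of e)ᵀᴴ * ρ * (of e)ᵀ).diag * (of e)ᵀᴴ := by
  ext j k
  rw [projMeas, Matrix.sum_apply, mul_apply]
  simp only [mul_diagonal]
  simp only [mul_apply, vecMulVec_apply, conjTranspose_apply, transpose_apply,
    of_apply, diag_apply, Finset.sum_mul, Finset.mul_sum]
  refine Finset.sum_congr rfl fun _ _ => Finset.sum_congr rfl fun _ _ =>
    Finset.sum_congr rfl fun _ _ => ?_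
  simp only [Pi.star_apply]
  ring

lemma posSemidef_projMeas {ρ : Matrix (Fin d) (Fin d) ℂ} (hρ : ρ.PosSemidef) :
    (projMeas e ρ).PosSemidef := by
  rw [projMeas_eq_conj_diagonal]
  exact (PosSemidef.diagonal fun _ => (hρ.conjTranspose_mul_mul_same _).diag_nonneg)
    |>.mul_mul_conjTranspose_same _

variable {e} (he : ∀ i j, star (e i) ⬝ᵥ e j = if i = j then 1 else 0)
include he

lemma conjTranspose_mul_self_of_orthonormal : (of e)ᵀᴴ * (of e)ᵀ = 1 := by
  ext i j
  simpa [mul_apply, one_apply, dotProduct] using he i j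

lemma mul_conjTranspose_self_of_orthonormal : (of e)ᵀ * (of e)ᵀᴴ = 1 :=
  mul_eq_one_comm.mp (conjTranspose_mul_self_of_orthonormal he)

lemma trace_projMeas (ρ : Matrix (Fin d) (Fin d) ℂ) : (projMeas e ρ).trace = ρ.trace := by
  rw [projMeas_eq_conj_diagonal, trace_mul_cycle, conjTranspose_mul_self_of_orthonormal he,
    Matrix.one_mul, trace_diagonal, ← trace, trace_mul_cycle,
    mul_conjTranspose_self_of_orthonormal he, Matrix.one_mul]

lemma le_card_smul_projMeas {ρ : Matrix (Fin d) (Fin d) ℂ} (hρ : ρ.PosSemidef) :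
    ρ ≤ (d : ℂ) • projMeas e ρ := by
  set B := (of e)ᵀ
  have hρB : B * (Bᴴ * ρ * B) * Bᴴ = ρ := by
    rw [show B * (Bᴴ * ρ * B) * Bᴴ = B * Bᴴ * ρ * (B * Bᴴ) by simp only [Matrix.mul_assoc],
      mul_conjTranspose_self_of_orthonormal he, Matrix.one_mul, Matrix.mul_one]
  have hpinch := (hρ.conjTranspose_mul_mul_same B).le_card_smul_diagonal_diag
  rw [le_iff, Fintype.card_fin] at hpinch
  have hconj : (d : ℂ) • projMeas e ρ - ρ =
      B * ((d : ℂ) • diagonal (Bᴴ * ρ * B).diag - Bᴴ * ρ * B) * Bᴴ := by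
    rw [projMeas_eq_conj_diagonal, Matrix.mul_sub, Matrix.sub_mul, hρB, Matrix.mul_smul,
      Matrix.smul_mul]
  rw [le_iff, hconj]
  exact hpinch.mul_mul_conjTranspose_same B

end ProjMeas

/-- for any density operator `ρ` on `ℂᵈ` and any complete projective
measurement `Π`, `½‖ρ − Π[ρ]‖₁ ≤ 1 − 1/d`. -/
theorem disturbance_state_le {d : ℕ} (hd : 0 < d)
    (ρ : Matrix (Fin d) (Fin d) ℂ) (hρ : ρ.PosSemidef) (hρt : ρ.trace = 1)
    (e : Fin d → Fin d → ℂ)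
    (he : ∀ i j, star (e i) ⬝ᵥ e j = if i = j then 1 else 0) :
    (1 / 2) * traceNorm (ρ - projMeas e ρ) ≤ 1 - 1 / d := by
  have hd' : (1 : ℝ) ≤ d := by exact_mod_cast hd
  have hdom : ρ ≤ ((d : ℝ) : ℂ) • projMeas e ρ := by exact_mod_cast le_card_smul_projMeas he hρ
  simpa [hρt] using hρ.half_traceNorm_sub_le (posSemidef_projMeas e hρ).isHermitian
    (trace_projMeas he ρ) hd' hdom
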